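/- arXiv:1112.2115 — 2 statements merged into one kernel-verified Lean document; each statement's English description precedes it below -/
import Mathlib

section
/- For every board B, d(B) = |B| − f(B), i.e., the maximum number of dominoes in a saturated domino covering of B equals the number of cells of B minus the minimum number of fragments in a fragment tiling of B. -/
/-- A cell of the square grid. -/
abbrev Cell : Type := ℤ × ℤ

/-- Two cells are adjacent iff they differ by 1 in exactly one coordinate. -/
def Adj (p q : Cell) : Prop := |p.1 - q.1| + |p.2 - q.2| = 1

/-- A board: a finite nonempty set of cells, each adjacent to another cell of the board. -/
def IsBoard (B : Set Cell) : Prop :=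
  B.Finite ∧ B.Nonempty ∧ ∀ p ∈ B, ∃ q ∈ B, Adj p q

/-- A domino of `B`: a two-element subset of `B` whose cells are adjacent. -/
def IsDomino (B : Set Cell) (e : Finset Cell) : Prop :=
  ∃ p q : Cell, p ∈ B ∧ q ∈ B ∧ Adj p q ∧ e = {p, q}

/-- A domino covering of `B`: a finite set of dominoes of `B` whose union is `B`. -/
def IsDominoCovering (B : Set Cell) (D : Finset (Finset Cell)) : Prop :=
  (∀ e ∈ D, IsDomino B e) ∧ (⋃ e ∈ D, (↑e : Set Cell)) = B

/-- A saturated domino covering: removing any domino leaves some cell uncovered. -/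
def IsSaturatedCovering (B : Set Cell) (D : Finset (Finset Cell)) : Prop :=
  IsDominoCovering B D ∧ ∀ e ∈ D, (⋃ e' ∈ D.erase e, (↑e' : Set Cell)) ⊂ B

/-- `dNum B` is the maximum number of dominoes in a saturated domino covering of `B`. -/
noncomputable def dNum (B : Set Cell) : ℕ :=
  sSup {k : ℕ | ∃ D : Finset (Finset Cell), IsSaturatedCovering B D ∧ D.card = k}

/-- The X-pentomino centered at `c`: the cell `c` together with its four adjacent cells. -/
def Xpent (c : Cell) : Set Cell :=
  {c, (c.1 + 1, c.2), (c.1 - 1, c.2), (c.1, c.2 + 1), (c.1, c.2 - 1)}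

/-- A set of cells is connected under adjacency. -/
def ConnectedUnderAdj (F : Set Cell) : Prop :=
  ∀ p ∈ F, ∀ q ∈ F, Relation.ReflTransGen (fun a b => a ∈ F ∧ b ∈ F ∧ Adj a b) p q

/-- A fragment: a connected subset of some X-pentomino with at least two cells. -/
def IsFragment (F : Set Cell) : Prop :=
  (∃ c : Cell, F ⊆ Xpent c) ∧ 2 ≤ F.ncard ∧ ConnectedUnderAdj F

/-- A fragment tiling of `B`: a partition of `B` into pairwise disjoint fragments. -/
def IsFragmentTiling (B : Set Cell) (T : Finset (Set Cell)) : Prop :=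
  (∀ F ∈ T, IsFragment F) ∧
  (∀ F ∈ T, ∀ G ∈ T, F ≠ G → Disjoint F G) ∧
  (⋃ F ∈ T, F) = B

/-- `fNum B` is the minimum number of fragments in a fragment tiling of `B`. -/
noncomputable def fNum (B : Set Cell) : ℕ :=
  sInf {k : ℕ | ∃ T : Finset (Set Cell), IsFragmentTiling B T ∧ T.card = k}

/-- `xNum B` is the minimum number of X-pentominoes (centered anywhere, allowed to
overlap and to extend outside `B`) whose union covers `B`. -/
noncomputable def xNum (B : Set Cell) : ℕ :=
  sInf {k : ℕ | ∃ C : Finset Cell, B ⊆ (⋃ c ∈ C, Xpent c) ∧ C.card = k}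

/-
Saturated domino coverings and fragment tilings of `B` are two views of the same object: a
spanning forest of stars on `B`, each with at least one leaf. In a saturated covering every
domino has a private cell, covered by no other domino; choosing one in each domino gives the
leaves, and every other cell is the center of the star of leaves whose domino it meets. Such a
star lies in the X-pentomino around its center, so it is a fragment. Conversely every fragment
is a star around one of its cells, and joining each other cell to its center gives a saturated
covering. A star forest with `ℓ` leaves has `ℓ` edges and `|B| - ℓ` stars.
-/

lemma adj_iff (p q : Cell) : Adj p q ↔
    (p.1 = q.1 ∧ (p.2 = q.2 + 1 ∨ p.2 = q.2 - 1)) ∨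
    (p.2 = q.2 ∧ (p.1 = q.1 + 1 ∨ p.1 = q.1 - 1)) := by
  unfold Adj
  rcases abs_cases (p.1 - q.1) with ⟨h1, h1'⟩ | ⟨h1, h1'⟩ <;>
    rcases abs_cases (p.2 - q.2) with ⟨h2, h2'⟩ | ⟨h2, h2'⟩ <;> rw [h1, h2] <;> omega

lemma Adj.symm {p q : Cell} (h : Adj p q) : Adj q p := by
  rw [adj_iff] at *; omega

lemma Adj.ne {p q : Cell} (h : Adj p q) : p ≠ q := by
  rintro rfl; rw [adj_iff] at h; omega

lemma xpent_eq_insert (c : Cell) : Xpent c = insert c {x | Adj x c} := by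
  ext x
  simp only [Xpent, Set.mem_insert_iff, Set.mem_singleton_iff, Set.mem_ofPred_eq, adj_iff,
    Prod.ext_iff]
  omega

lemma xpent_finite (c : Cell) : (Xpent c).Finite := by
  unfold Xpent; exact Set.toFinite _

lemma eq_or_eq_of_adj_of_mem_xpent {u v c : Cell} (hu : u ∈ Xpent c) (hv : v ∈ Xpent c)
    (h : Adj u v) : u = c ∨ v = c := by
  simp only [Xpent, Set.mem_insert_iff, Set.mem_singleton_iff, Prod.ext_iff] at hu hv
  rw [adj_iff] at h
  simp only [Prod.ext_iff]
  omega

lemma connectedUnderAdj_insert {c : Cell} {A : Set Cell} (hA : ∀ u ∈ A, Adj u c) :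
    ConnectedUnderAdj (insert c A) := by
  have to_c : ∀ p ∈ insert c A,
      Relation.ReflTransGen (fun a b => a ∈ insert c A ∧ b ∈ insert c A ∧ Adj a b) p c ∧
      Relation.ReflTransGen (fun a b => a ∈ insert c A ∧ b ∈ insert c A ∧ Adj a b) c p := by
    rintro p (rfl | hp)
    · exact ⟨.refl, .refl⟩
    · exact ⟨.single ⟨.inr hp, .inl rfl, hA p hp⟩, .single ⟨.inl rfl, .inr hp, (hA p hp).symm⟩⟩
  exact fun p hp q hq => (to_c p hp).1.trans (to_c q hq).2

lemma isFragment_insert {c : Cell} {A : Set Cell} (hA : ∀ u ∈ A, Adj u c) (hne : A.Nonempty) :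
    IsFragment (insert c A) := by
  have hsub : insert c A ⊆ Xpent c := by
    rw [xpent_eq_insert]; exact Set.insert_subset_insert hA
  obtain ⟨u, hu⟩ := hne
  refine ⟨⟨c, hsub⟩, ?_, connectedUnderAdj_insert hA⟩
  calc 2 = ({c, u} : Set Cell).ncard := (Set.ncard_pair (hA u hu).ne.symm).symm
    _ ≤ (insert c A).ncard :=
      Set.ncard_le_ncard (Set.insert_subset_insert (Set.singleton_subset_iff.mpr hu))
        ((xpent_finite c).subset hsub)

/-- Two cells of an X-pentomino that are not its center are never adjacent, so a connected
subset with two cells must contain the center. -/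
lemma IsFragment.exists_center {F : Set Cell} (hF : IsFragment F) :
    ∃ c ∈ F, ∀ x ∈ F, x ≠ c → Adj x c := by
  obtain ⟨⟨c, hsub⟩, hcard, hconn⟩ := hF
  refine ⟨c, ?_, fun x hx hne => ?_⟩
  · by_contra hc
    obtain ⟨x, hx⟩ := Set.nonempty_of_ncard_ne_zero (by omega : F.ncard ≠ 0)
    obtain ⟨y, hy, hyx⟩ := Set.exists_ne_of_one_lt_ncard hcard x
    rcases (hconn x hx y hy).cases_head with rfl | ⟨z, ⟨hxF, hzF, hxz⟩, -⟩
    · exact hyx rfl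
    · rcases eq_or_eq_of_adj_of_mem_xpent (hsub hxF) (hsub hzF) hxz with rfl | rfl <;>
        contradiction
  · have := hsub hx
    rw [xpent_eq_insert] at this
    exact this.resolve_left hne

section

variable {B : Set Cell} {D : Finset (Finset Cell)} {T : Finset (Set Cell)}

lemma IsDomino.exists_eq_pair {e : Finset Cell} {x : Cell} (he : IsDomino B e) (hx : x ∈ e) :
    ∃ y ∈ B, Adj x y ∧ e = {x, y} := by
  obtain ⟨p, q, hp, hq, hpq, rfl⟩ := he
  rcases Finset.mem_insert.mp hx with rfl | hx
  · exact ⟨q, hq, hpq, rfl⟩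
  · obtain rfl := Finset.mem_singleton.mp hx
    exact ⟨p, hp, hpq.symm, Finset.pair_comm _ _⟩

lemma IsDomino.subset {e : Finset Cell} (he : IsDomino B e) : ↑e ⊆ B := by
  obtain ⟨p, q, hp, hq, -, rfl⟩ := he
  simpa [Set.insert_subset_iff] using ⟨hp, hq⟩

lemma isDominoCovering_of_forall_mem (hdom : ∀ e ∈ D, IsDomino B e)
    (hcov : ∀ z ∈ B, ∃ e ∈ D, z ∈ e) : IsDominoCovering B D := by
  refine ⟨hdom, (Set.iUnion₂_subset fun e he => (hdom e he).subset).antisymm fun z hz => ?_⟩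
  obtain ⟨e, he, hze⟩ := hcov z hz
  exact Set.mem_biUnion he hze

lemma IsDominoCovering.exists_mem (hD : IsDominoCovering B D) {z : Cell} (hz : z ∈ B) :
    ∃ e ∈ D, z ∈ e := by
  rw [← hD.2] at hz
  simpa using hz

lemma biUnion_erase_ssubset_iff {α : Type*} [DecidableEq α] {E : Finset (Finset α)}
    {e : Finset α} (he : e ∈ E) :
    (⋃ e' ∈ E.erase e, (e' : Set α)) ⊂ ⋃ e' ∈ E, (e' : Set α) ↔
      ∃ x ∈ e, ∀ e' ∈ E, x ∈ e' → e' = e := by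
  have hsub : (⋃ e' ∈ E.erase e, (e' : Set α)) ⊆ ⋃ e' ∈ E, (e' : Set α) :=
    Set.iUnion₂_subset fun e' he' =>
      Set.subset_iUnion₂_of_subset e' (Finset.mem_of_mem_erase he') subset_rfl
  rw [Set.ssubset_iff_of_subset hsub]
  simp only [Set.mem_iUnion, Finset.mem_coe, Finset.mem_erase, not_exists]
  constructor
  · rintro ⟨x, ⟨e', he', hxe'⟩, hx⟩
    have hpriv : ∀ e'' ∈ E, x ∈ e'' → e'' = e := fun e'' he'' hxe'' => by
      by_contra hne; exact hx e'' ⟨hne, he''⟩ hxe''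
    exact ⟨x, hpriv e' he' hxe' ▸ hxe', hpriv⟩
  · rintro ⟨x, hxe, hpriv⟩
    exact ⟨x, ⟨e, he, hxe⟩, fun e' ⟨hne, he'⟩ hxe' => hne (hpriv e' he' hxe')⟩

lemma isSaturatedCovering_iff :
    IsSaturatedCovering B D ↔
      IsDominoCovering B D ∧ ∀ e ∈ D, ∃ x ∈ e, ∀ e' ∈ D, x ∈ e' → e' = e := by
  refine and_congr_right fun hD => forall₂_congr fun e he => ?_
  rw [← hD.2, biUnion_erase_ssubset_iff he]

lemma IsFragmentTiling.subset (hT : IsFragmentTiling B T) {F : Set Cell} (hF : F ∈ T) : F ⊆ B :=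
  hT.2.2 ▸ Set.subset_biUnion_of_mem (u := id) hF

lemma IsFragmentTiling.eq_of_mem (hT : IsFragmentTiling B T) {F G : Set Cell} (hF : F ∈ T)
    (hG : G ∈ T) {x : Cell} (hxF : x ∈ F) (hxG : x ∈ G) : F = G := by
  by_contra hne
  exact Set.disjoint_left.mp (hT.2.1 F hF G hG hne) hxF hxG

lemma IsFragmentTiling.exists_mem (hT : IsFragmentTiling B T) {x : Cell} (hx : x ∈ B) :
    ∃ F ∈ T, x ∈ F := by
  rw [← hT.2.2] at hx
  simpa using hx

end

/-- A spanning forest of stars on `B`: the cells of `B` outside `leaves` are the centers, and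
each leaf `x` is joined to the center `center x`. -/
structure StarForest (B : Finset Cell) where
  leaves : Finset Cell
  center : Cell → Cell
  leaves_subset : leaves ⊆ B
  center_mem : ∀ x ∈ leaves, center x ∈ B
  center_not_mem_leaves : ∀ x ∈ leaves, center x ∉ leaves
  adj_center : ∀ x ∈ leaves, Adj x (center x)
  exists_leaf : ∀ z ∈ B, z ∉ leaves → ∃ x ∈ leaves, center x = z

namespace StarForest

variable {B : Finset Cell} (S : StarForest B)

def dominoes : Finset (Finset Cell) :=
  S.leaves.image fun x => {x, S.center x}

lemma mem_pair_center_iff {x y : Cell} (hx : x ∈ S.leaves) (hy : y ∈ S.leaves) :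
    x ∈ ({y, S.center y} : Finset Cell) ↔ x = y := by
  rw [Finset.mem_insert, Finset.mem_singleton, or_iff_left]
  rintro rfl
  exact S.center_not_mem_leaves y hy hx

lemma isSaturatedCovering_dominoes : IsSaturatedCovering B S.dominoes := by
  simp only [isSaturatedCovering_iff, dominoes, Finset.forall_mem_image]
  refine ⟨isDominoCovering_of_forall_mem ?_ fun z hz => ?_, fun x hx => ?_⟩
  · exact Finset.forall_mem_image.mpr fun x hx =>
      ⟨x, _, S.leaves_subset hx, S.center_mem x hx, S.adj_center x hx, rfl⟩
  · by_cases hzl : z ∈ S.leaves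
    · exact ⟨_, Finset.mem_image_of_mem _ hzl, Finset.mem_insert_self _ _⟩
    · obtain ⟨x, hx, rfl⟩ := S.exists_leaf z hz hzl
      exact ⟨_, Finset.mem_image_of_mem _ hx,
        Finset.mem_insert_of_mem (Finset.mem_singleton_self _)⟩
  · refine ⟨x, Finset.mem_insert_self _ _, ?_⟩
    intro y hy hxy
    rw [(S.mem_pair_center_iff hx hy).mp hxy]

lemma card_dominoes : S.dominoes.card = S.leaves.card :=
  Finset.card_image_of_injOn fun _ hx _ hy hxy =>
    (S.mem_pair_center_iff hx hy).mp (hxy ▸ Finset.mem_insert_self _ _)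

def star (z : Cell) : Set Cell :=
  insert z {x | x ∈ S.leaves ∧ S.center x = z}

lemma eq_of_mem_star {y z z' : Cell} (hz : z ∉ S.leaves) (hz' : z' ∉ S.leaves)
    (hy : y ∈ S.star z) (hy' : y ∈ S.star z') : z = z' := by
  rcases hy with rfl | ⟨hyl, rfl⟩
  · rcases hy' with rfl | ⟨hyl, -⟩
    · rfl
    · exact absurd hyl hz
  · rcases hy' with rfl | ⟨-, rfl⟩
    · exact absurd hyl hz'
    · rfl

lemma star_subset {z : Cell} (hz : z ∈ B) : S.star z ⊆ B :=
  Set.insert_subset hz fun _ hx => S.leaves_subset hx.1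

noncomputable def tiling : Finset (Set Cell) :=
  (B \ S.leaves).image S.star

lemma isFragmentTiling_tiling : IsFragmentTiling B S.tiling := by
  simp only [IsFragmentTiling, tiling, Finset.forall_mem_image, Finset.mem_sdiff]
  refine ⟨fun z ⟨hzB, hzl⟩ => ?_, fun z ⟨_, hzl⟩ z' ⟨_, hzl'⟩ hne => ?_, ?_⟩
  · refine isFragment_insert (fun x hx => hx.2 ▸ S.adj_center x hx.1) ?_
    obtain ⟨x, hx, hxz⟩ := S.exists_leaf z hzB hzl
    exact ⟨x, hx, hxz⟩
  · exact Set.disjoint_left.mpr fun y hy hy' =>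
      hne (congrArg S.star (S.eq_of_mem_star hzl hzl' hy hy'))
  · refine (Set.iUnion₂_subset ?_).antisymm fun y hy => ?_
    · simp only [Finset.mem_image, Finset.mem_sdiff]
      rintro _ ⟨z, ⟨hzB, -⟩, rfl⟩
      exact S.star_subset hzB
    · simp only [Set.mem_iUnion, Finset.mem_image, Finset.mem_sdiff, exists_prop]
      by_cases hyl : y ∈ S.leaves
      · exact ⟨_, ⟨_, ⟨S.center_mem y hyl, S.center_not_mem_leaves y hyl⟩, rfl⟩,
          Set.mem_insert_of_mem _ ⟨hyl, rfl⟩⟩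
      · exact ⟨_, ⟨y, ⟨hy, hyl⟩, rfl⟩, Set.mem_insert _ _⟩

lemma card_tiling_add_card_leaves : S.tiling.card + S.leaves.card = B.card := by
  rw [tiling, Finset.card_image_of_injOn, Finset.card_sdiff_add_card_eq_card S.leaves_subset]
  intro z hz z' hz' h
  simp only [Finset.coe_sdiff, Set.mem_sdiff, Finset.mem_coe] at hz hz'
  exact S.eq_of_mem_star hz.2 hz'.2 (Set.mem_insert z _) (h ▸ Set.mem_insert z _)

end StarForest

section

variable {B : Finset Cell} {D : Finset (Finset Cell)} {T : Finset (Set Cell)}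

lemma IsSaturatedCovering.exists_starForest (hD : IsSaturatedCovering B D) :
    ∃ S : StarForest B, S.leaves.card = D.card := by
  obtain ⟨hcov, hpriv⟩ := isSaturatedCovering_iff.mp hD
  choose! p hpe hp using hpriv
  have hother : ∀ x ∈ D.image p, ∃ y ∈ (B : Set Cell), Adj x y ∧ {x, y} ∈ D := by
    simp only [Finset.forall_mem_image]
    intro e he
    obtain ⟨y, hy, hxy, hexy⟩ := (hcov.1 e he).exists_eq_pair (hpe e he)
    exact ⟨y, hy, hxy, hexy ▸ he⟩
  choose! q hqB hq hqD using hother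
  have pair_eq : ∀ e ∈ D, {p e, q (p e)} = e := fun e he =>
    hp e he _ (hqD _ (Finset.mem_image_of_mem p he)) (Finset.mem_insert_self _ _)
  refine ⟨⟨D.image p, q, ?_, hqB, ?_, hq, ?_⟩, Finset.card_image_of_injOn ?_⟩
  · simp only [Finset.image_subset_iff]
    exact fun e he => (hcov.1 e he).subset (hpe e he)
  · intro x hx hqx
    obtain ⟨e, he, rfl⟩ := Finset.mem_image.mp hx
    obtain ⟨e', he', hqp⟩ := Finset.mem_image.mp hqx
    obtain rfl : e = e' := pair_eq e he ▸ hp e' he' _ (hqD _ (Finset.mem_image_of_mem p he))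
      (hqp ▸ Finset.mem_insert_of_mem (Finset.mem_singleton_self _))
    exact (hq _ (Finset.mem_image_of_mem p he)).ne hqp
  · intro z hz hzl
    obtain ⟨e, he, hze⟩ := hcov.exists_mem hz
    refine ⟨p e, Finset.mem_image_of_mem p he, ?_⟩
    rw [← pair_eq e he, Finset.mem_insert, Finset.mem_singleton] at hze
    exact (hze.resolve_left fun h => hzl (h ▸ Finset.mem_image_of_mem p he)).symm
  · intro e he e' he' h
    exact (hp e he e' he' (by rw [h]; exact hpe e' he')).symm

lemma IsFragmentTiling.exists_starForest (hT : IsFragmentTiling B T) :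
    ∃ S : StarForest B, S.leaves.card + T.card = B.card := by
  classical
  choose! ctr hctr hadj using fun F hF => (hT.1 F hF).exists_center
  choose! piece hpiece hmem using fun x (hx : x ∈ (B : Set Cell)) => hT.exists_mem hx
  have piece_eq : ∀ F ∈ T, ∀ x ∈ F, piece x = F := fun F hF x hx =>
    hT.eq_of_mem (hpiece x (hT.subset hF hx)) hF (hmem x (hT.subset hF hx)) hx
  have ctr_mem : ∀ x ∈ B, ctr (piece x) ∈ B := fun x hx =>
    hT.subset (hpiece x hx) (hctr _ (hpiece x hx))
  refine ⟨⟨B.filter fun x => x ≠ ctr (piece x), fun x => ctr (piece x),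
    Finset.filter_subset _ _, ?_, ?_, ?_, ?_⟩, ?_⟩
  · exact fun x hx => ctr_mem x (Finset.mem_filter.mp hx).1
  · intro x hx
    have hx := (Finset.mem_filter.mp hx).1
    rw [Finset.mem_filter, piece_eq _ (hpiece x hx) _ (hctr _ (hpiece x hx))]
    exact fun h => h.2 rfl
  · intro x hx
    obtain ⟨hxB, hne⟩ := Finset.mem_filter.mp hx
    exact hadj _ (hpiece x hxB) x (hmem x hxB) hne
  · intro z hz hzl
    have hzc : z = ctr (piece z) := by simpa [hz] using hzl
    obtain ⟨y, hy, hyz⟩ := Set.exists_ne_of_one_lt_ncard (hT.1 _ (hpiece z hz)).2.1 z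
    have hpy := piece_eq _ (hpiece z hz) y hy
    exact ⟨y, Finset.mem_filter.mpr ⟨hT.subset (hpiece z hz) hy, hpy ▸ hzc ▸ hyz⟩,
      hpy ▸ hzc.symm⟩
  · rw [← Finset.card_filter_add_card_filter_not (s := B) (fun x => x ≠ ctr (piece x))]
    congr 1
    simp only [not_not]
    refine Finset.card_nbij' ctr piece (fun F hF => ?_) (fun x hx => ?_) (fun F hF => ?_)
      fun x hx => ?_
    · have hcB : ctr F ∈ B := hT.subset hF (hctr F hF)
      simp [hcB, piece_eq F hF _ (hctr F hF)]
    · exact hpiece x (Finset.mem_filter.mp hx).1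
    · exact piece_eq F hF _ (hctr F hF)
    · exact ((Finset.mem_filter.mp hx).2).symm

lemma IsSaturatedCovering.exists_isFragmentTiling (hD : IsSaturatedCovering B D) :
    ∃ T : Finset (Set Cell), IsFragmentTiling B T ∧ T.card + D.card = B.card := by
  obtain ⟨S, hS⟩ := hD.exists_starForest
  exact ⟨S.tiling, S.isFragmentTiling_tiling, hS ▸ S.card_tiling_add_card_leaves⟩

lemma IsFragmentTiling.exists_isSaturatedCovering (hT : IsFragmentTiling B T) :
    ∃ D : Finset (Finset Cell), IsSaturatedCovering B D ∧ D.card + T.card = B.card := by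
  obtain ⟨S, hS⟩ := hT.exists_starForest
  exact ⟨S.dominoes, S.isSaturatedCovering_dominoes, S.card_dominoes ▸ hS⟩

/-- A domino covering of minimal size is saturated. -/
lemma exists_isSaturatedCovering (hB : ∀ p ∈ B, ∃ q ∈ B, Adj p q) :
    ∃ D : Finset (Finset Cell), IsSaturatedCovering B D := by
  choose! nbr hnbrB hnbr using hB
  have hD₀ : IsDominoCovering B (B.image fun p => {p, nbr p}) := by
    refine isDominoCovering_of_forall_mem ?_ fun z hz => ?_
    · simp only [Finset.forall_mem_image]
      exact fun p hp => ⟨p, nbr p, hp, hnbrB p hp, hnbr p hp, rfl⟩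
    · exact ⟨_, Finset.mem_image_of_mem _ hz, Finset.mem_insert_self _ _⟩
  obtain ⟨D, hD, hmin⟩ := (InvImage.wf Finset.card wellFounded_lt).has_min
    {D | IsDominoCovering (B : Set Cell) D} ⟨_, hD₀⟩
  refine ⟨D, hD, fun e he => ?_⟩
  have hsub : (⋃ e' ∈ D.erase e, (e' : Set Cell)) ⊆ B :=
    hD.2 ▸ Set.biUnion_subset_biUnion_left (Finset.erase_subset e D)
  refine Set.ssubset_iff_subset_ne.mpr ⟨hsub, fun heq => ?_⟩
  exact hmin (D.erase e) ⟨fun e' he' => hD.1 e' (Finset.mem_of_mem_erase he'), heq⟩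
    (Finset.card_erase_lt_of_mem he)

end

/-- For every board `B`, `d(B) = |B| - f(B)`. -/
theorem dNum_eq_card_sub_fNum (B : Set Cell) (hB : IsBoard B) :
    dNum B = B.ncard - fNum B := by
  obtain ⟨hfin, -, hadj⟩ := hB
  obtain ⟨B, rfl⟩ := hfin.exists_finset_coe
  rw [Set.ncard_coe_finset]
  obtain ⟨D₁, hD₁⟩ := exists_isSaturatedCovering hadj
  obtain ⟨T₁, hT₁, -⟩ := hD₁.exists_isFragmentTiling
  obtain ⟨T₀, hT₀, hT₀card⟩ : fNum B ∈ {k | ∃ T, IsFragmentTiling B T ∧ T.card = k} :=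
    Nat.sInf_mem ⟨_, T₁, hT₁, rfl⟩
  obtain ⟨D₀, hD₀, hD₀card⟩ := hT₀.exists_isSaturatedCovering
  refine IsGreatest.csSup_eq ⟨⟨D₀, hD₀, by omega⟩, ?_⟩
  rintro _ ⟨D, hD, rfl⟩
  obtain ⟨T, hT, hTcard⟩ := hD.exists_isFragmentTiling
  have : fNum B ≤ T.card := Nat.sInf_le ⟨T, hT, rfl⟩
  omega
end

section
/- If B is a regular board, then x(B) = f(B). -/
/-- A board is regular if any two of its cells having a common adjacent cell in the grid
also have a common adjacent cell belonging to the board. -/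
def IsRegularBoard (B : Set Cell) : Prop :=
  IsBoard B ∧ ∀ p ∈ B, ∀ q ∈ B,
    (∃ r : Cell, Adj p r ∧ Adj q r) → ∃ r ∈ B, Adj p r ∧ Adj q r

/-!
The centres of the X-pentominoes containing the fragments of a tiling cover `B`, so
`x(B) ≤ f(B)`. Conversely, regularity lets each X-pentomino of a covering be replaced by one
centred in `B` that covers the same cells of `B`: if its centre `c` is not in `B`, no two
opposite neighbours of `c` lie in `B`, so the cells of `B` around `c` are covered by a common
neighbour in `B`. Attaching every cell of `B` to an adjacent centre splits `B` into stars, and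
a star reduced to its centre is removed by an exchange with a neighbouring star that never adds
centres. This tiles `B` by at most `x(B)` fragments.
-/

lemma adj_iff_natAbs {p q : Cell} :
    Adj p q ↔ (p.1 - q.1).natAbs + (p.2 - q.2).natAbs = 1 := by
  unfold Adj; rw [Int.abs_eq_natAbs, Int.abs_eq_natAbs]; omega

lemma adj_iff_eq {v c : Cell} : Adj v c ↔
    v = (c.1 + 1, c.2) ∨ v = (c.1 - 1, c.2) ∨ v = (c.1, c.2 + 1) ∨ v = (c.1, c.2 - 1) := by
  simp only [adj_iff_natAbs, Prod.ext_iff]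
  omega

lemma mem_xpent_iff {v c : Cell} : v ∈ Xpent c ↔ v = c ∨ Adj v c := by
  simp only [Xpent, Set.mem_insert_iff, Set.mem_singleton_iff, adj_iff_eq]

lemma mem_xpent_self (c : Cell) : c ∈ Xpent c := mem_xpent_iff.2 (Or.inl rfl)

lemma mem_xpent_of_adj {v c : Cell} (h : Adj v c) : v ∈ Xpent c := mem_xpent_iff.2 (Or.inr h)

lemma mem_xpent_comm {v c : Cell} : v ∈ Xpent c ↔ c ∈ Xpent v := by
  simp only [mem_xpent_iff, eq_comm (a := v)]
  exact or_congr_right ⟨Adj.symm, Adj.symm⟩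

lemma eq_of_adj_of_add_eq_add {a b c r : Cell} (ha : Adj a c) (hab : a + b = c + c)
    (har : Adj a r) (hbr : Adj b r) : r = c := by
  rw [adj_iff_natAbs] at ha har hbr
  simp only [Prod.ext_iff, Prod.fst_add, Prod.snd_add] at hab ⊢
  omega

lemma eq_or_eq_or_add_eq_add {a b c v : Cell} (ha : Adj a c) (hb : Adj b c) (hv : Adj v c)
    (hab : a ≠ b) (hopp : a + b ≠ c + c) :
    v = a ∨ v = b ∨ v + a = c + c ∨ v + b = c + c := by
  rw [adj_iff_eq] at ha hb hv
  rcases ha with rfl | rfl | rfl | rfl <;> rcases hb with rfl | rfl | rfl | rfl <;>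
    rcases hv with rfl | rfl | rfl | rfl <;> simp [Prod.ext_iff] at hab hopp ⊢

lemma IsRegularBoard.exists_mem_inter_xpent_subset {B : Set Cell} (hB : IsRegularBoard B)
    (c : Cell) : ∃ d ∈ B, B ∩ Xpent c ⊆ Xpent d := by
  obtain ⟨⟨-, ⟨b₀, hb₀⟩, -⟩, hreg⟩ := hB
  by_cases hc : c ∈ B
  · exact ⟨c, hc, Set.inter_subset_right⟩
  have hadj : ∀ v ∈ B ∩ Xpent c, Adj v c := fun v hv =>
    (mem_xpent_iff.1 hv.2).resolve_left (by rintro rfl; exact hc hv.1)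
  -- the common neighbour in `B` of two opposite neighbours of `c` could only be `c`
  have hopp : ∀ p ∈ B ∩ Xpent c, ∀ q ∈ B ∩ Xpent c, p + q ≠ c + c := by
    intro p hp q hq hpq
    obtain ⟨r, hr, hpr, hqr⟩ := hreg p hp.1 q hq.1 ⟨c, hadj p hp, hadj q hq⟩
    exact hc (eq_of_adj_of_add_eq_add (hadj p hp) hpq hpr hqr ▸ hr)
  by_cases hsub : (B ∩ Xpent c).Subsingleton
  · rcases (B ∩ Xpent c).eq_empty_or_nonempty with he | ⟨a, ha⟩
    · exact ⟨b₀, hb₀, by simp [he]⟩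
    · exact ⟨a, ha.1, fun v hv => hsub hv ha ▸ mem_xpent_self a⟩
  obtain ⟨a, ha, b, hb, hab⟩ := Set.not_subsingleton_iff.1 hsub
  obtain ⟨r, hr, har, hbr⟩ := hreg a ha.1 b hb.1 ⟨c, hadj a ha, hadj b hb⟩
  refine ⟨r, hr, fun v hv => ?_⟩
  rcases eq_or_eq_or_add_eq_add (hadj a ha) (hadj b hb) (hadj v hv) hab (hopp a ha b hb) with
    rfl | rfl | hva | hvb
  · exact mem_xpent_of_adj har
  · exact mem_xpent_of_adj hbr
  · exact absurd hva (hopp v hv a ha)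
  · exact absurd hvb (hopp v hv b hb)

lemma isFragment_of_subset_xpent {F : Set Cell} {c w : Cell} (hc : c ∈ F) (hw : w ∈ F)
    (hwc : w ≠ c) (hF : F ⊆ Xpent c) : IsFragment F := by
  refine ⟨⟨c, hF⟩, ?_, fun p hp r hr => ?_⟩
  · have hFfin : F.Finite := (by simp [Xpent] : (Xpent c).Finite).subset hF
    exact (Set.one_lt_ncard hFfin).2 ⟨w, hw, c, hc, hwc⟩
  have toCenter :
      ∀ x ∈ F, Relation.ReflTransGen (fun a b => a ∈ F ∧ b ∈ F ∧ Adj a b) x c := by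
    intro x hx
    rcases mem_xpent_iff.1 (hF hx) with rfl | hxc
    · rfl
    · exact .single ⟨hx, hc, hxc⟩
  rcases mem_xpent_iff.1 (hF hr) with rfl | hrc
  · exact toCenter p hp
  · exact (toCenter p hp).tail ⟨hc, hr, hrc.symm⟩

lemma IsRegularBoard.exists_subset_covering {B : Set Cell} (hB : IsRegularBoard B)
    {C : Finset Cell} (hC : B ⊆ ⋃ c ∈ C, Xpent c) :
    ∃ S : Finset Cell, ↑S ⊆ B ∧ B ⊆ ⋃ s ∈ S, Xpent s ∧ S.card ≤ C.card := by
  classical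
  choose d hdB hd using hB.exists_mem_inter_xpent_subset
  refine ⟨C.image d, ?_, fun v hv => ?_, Finset.card_image_le⟩
  · simp only [Finset.coe_image]
    rintro _ ⟨c, -, rfl⟩
    exact hdB c
  · obtain ⟨c, hc, hvc⟩ := Set.mem_iUnion₂.1 (hC hv)
    exact Set.mem_iUnion₂.2 ⟨d c, Finset.mem_image_of_mem d hc, hd c ⟨hv, hvc⟩⟩

section StarMap

variable {B : Set Cell} {f : Cell → Cell}

/-- `f v` is the centre of the star containing `v`. -/
def IsStarMap (B : Set Cell) (f : Cell → Cell) : Prop :=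
  ∀ v ∈ B, f v ∈ B ∧ v ∈ Xpent (f v) ∧ f (f v) = f v

def starCenters (B : Set Cell) (f : Cell → Cell) : Set Cell := {c ∈ B | f c = c}

def lonelyCenters (B : Set Cell) (f : Cell → Cell) : Set Cell :=
  {c ∈ B | ∀ w ∈ B, f w = c ↔ w = c}

def IsStarImprovement (B : Set Cell) (f g : Cell → Cell) (s : Cell) : Prop :=
  IsStarMap B g ∧ (starCenters B g).ncard ≤ (starCenters B f).ncard ∧
    lonelyCenters B g ⊆ lonelyCenters B f \ {s}

lemma IsStarMap.apply_ne_of_apply_self_ne (hf : IsStarMap B f) {q v : Cell} (hq : f q ≠ q)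
    (hv : v ∈ B) : f v ≠ q := fun h => hq (h ▸ (hf v hv).2.2)

lemma apply_ne_of_mem_lonelyCenters {s v : Cell} (hs : s ∈ lonelyCenters B f) (hv : v ∈ B)
    (hvs : v ≠ s) : f v ≠ s := fun h => hvs ((hs.2 v hv).1 h)

lemma apply_eq_of_mem_lonelyCenters {s : Cell} (hs : s ∈ lonelyCenters B f) : f s = s :=
  (hs.2 s hs.1).2 rfl

/-- A lonely centre joins the star of an adjacent centre. -/
lemma IsStarMap.exists_improvement_of_center (hfin : B.Finite) (hf : IsStarMap B f)
    {s q : Cell} (hs : s ∈ lonelyCenters B f) (hqB : q ∈ B) (hsq : Adj s q) (hq : f q = q) :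
    ∃ g, IsStarImprovement B f g s := by
  have hqs : q ≠ s := hsq.ne.symm
  refine ⟨Function.update f s q, fun v hv => ?_, ?_, ?_⟩
  · by_cases hvs : v = s
    · subst hvs
      simp [hqs, hq, hqB, mem_xpent_of_adj hsq]
    · obtain ⟨h1, h2, h3⟩ := hf v hv
      simp [hvs, apply_ne_of_mem_lonelyCenters hs hv hvs, h1, h2, h3]
  · refine Set.ncard_le_ncard ?_ (hfin.subset fun v hv => hv.1)
    rintro v ⟨hvB, hv⟩
    have hvs : v ≠ s := by rintro rfl; simp [hqs] at hv
    exact ⟨hvB, by simpa [hvs] using hv⟩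
  · rintro c ⟨hcB, hc⟩
    have hcs : c ≠ s := by rintro rfl; simpa [hqs] using (hc c hcB).2 rfl
    refine ⟨⟨hcB, fun w hw => ?_⟩, hcs⟩
    by_cases hws : w = s
    · subst hws
      simp [apply_eq_of_mem_lonelyCenters hs, hcs.symm]
    · simpa [hws] using hc w hw

/-- A lonely centre takes over a leaf `q` of a star that keeps another leaf. -/
lemma IsStarMap.exists_improvement_of_leaf (hfin : B.Finite) (hf : IsStarMap B f)
    {s q w : Cell} (hs : s ∈ lonelyCenters B f) (hqB : q ∈ B) (hsq : Adj s q) (hq : f q ≠ q)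
    (hwB : w ∈ B) (hwq : w ≠ q) (hw : w ≠ f q) (hfw : f w = f q) :
    ∃ g, IsStarImprovement B f g s := by
  have hsq' : s ≠ q := hsq.ne
  refine ⟨Function.update f q s, fun v hv => ?_, ?_, ?_⟩
  · by_cases hvq : v = q
    · subst hvq
      simp [hsq', apply_eq_of_mem_lonelyCenters hs, hs.1, mem_xpent_of_adj hsq.symm]
    · obtain ⟨h1, h2, h3⟩ := hf v hv
      simp [hvq, hf.apply_ne_of_apply_self_ne hq hv, h1, h2, h3]
  · refine Set.ncard_le_ncard ?_ (hfin.subset fun v hv => hv.1)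
    rintro v ⟨hvB, hv⟩
    have hvq : v ≠ q := by rintro rfl; simp [hsq'] at hv
    exact ⟨hvB, by simpa [hvq] using hv⟩
  · rintro c ⟨hcB, hc⟩
    have hcq : q ≠ c := by rintro rfl; simpa [hsq'] using (hc q hqB).2 rfl
    have hcs : c ≠ s := by rintro rfl; exact hcq ((hc q hqB).1 (by simp))
    refine ⟨⟨hcB, fun u hu => ?_⟩, hcs⟩
    by_cases huq : u = q
    · subst huq
      suffices f u ≠ c by simp [this, hcq]
      intro hfc
      exact hw (hfc ▸ (hc w hwB).1 (by simp [hwq, hfw, hfc]))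
    · simpa [huq] using hc u hu

/-- A lonely centre `s` and a star with the single leaf `q` merge into one star centred at `q`. -/
lemma IsStarMap.exists_improvement_of_single_leaf (hfin : B.Finite) (hf : IsStarMap B f)
    {s q : Cell} (hs : s ∈ lonelyCenters B f) (hqB : q ∈ B) (hsq : Adj s q) (hq : f q ≠ q)
    (honly : ∀ w ∈ B, w ≠ q → w ≠ f q → f w ≠ f q) :
    ∃ g, IsStarImprovement B f g s := by
  classical
  obtain ⟨hcB, hqc, hcc⟩ := hf q hqB
  set c := f q
  have hsc : s ≠ c := fun h => hsq.ne ((hs.2 q hqB).1 h.symm).symm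
  have hfs := apply_eq_of_mem_lonelyCenters hs
  set g : Cell → Cell := fun v => if v = s ∨ v = c ∨ v = q then q else f v with hg
  have hgq : g q = q := by simp [hg]
  refine ⟨g, fun v hv => ?_, ?_, ?_⟩
  · by_cases hv' : v = s ∨ v = c ∨ v = q
    · rw [show g v = q from if_pos hv']
      refine ⟨hqB, ?_, hgq⟩
      rcases hv' with rfl | rfl | rfl
      exacts [mem_xpent_of_adj hsq, mem_xpent_comm.1 hqc, mem_xpent_self _]
    · push Not at hv'
      obtain ⟨h1, h2, h3⟩ := hf v hv
      have hfv : ¬(f v = s ∨ f v = c ∨ f v = q) := by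
        push Not
        refine ⟨apply_ne_of_mem_lonelyCenters hs hv hv'.1, honly v hv hv'.2.2 hv'.2.1,
          hf.apply_ne_of_apply_self_ne hq hv⟩
      simp [hg, hv'.1, hv'.2.1, hv'.2.2, hfv, h1, h2, h3]
  · have hsub : starCenters B g ⊆ insert q (starCenters B f \ {s, c}) := by
      rintro v ⟨hvB, hv⟩
      by_cases hv' : v = s ∨ v = c ∨ v = q
      · exact Or.inl (hv.symm.trans (if_pos hv'))
      · push Not at hv'
        refine Or.inr ⟨⟨hvB, ?_⟩, by simp [hv'.1, hv'.2.1]⟩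
        rwa [show g v = f v from if_neg (by tauto)] at hv
    have hpair : {s, c} ⊆ starCenters B f := by
      rintro _ (rfl | rfl)
      exacts [⟨hs.1, hfs⟩, ⟨hcB, hcc⟩]
    have hsplit := Set.ncard_sdiff_add_ncard_of_subset hpair (hfin.subset fun v hv => hv.1)
    rw [Set.ncard_pair hsc] at hsplit
    calc (starCenters B g).ncard
        ≤ (insert q (starCenters B f \ {s, c})).ncard :=
          Set.ncard_le_ncard hsub ((hfin.subset fun v hv => hv.1.1).insert q)
      _ ≤ (starCenters B f \ {s, c}).ncard + 1 := Set.ncard_insert_le _ _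
      _ ≤ (starCenters B f).ncard := by omega
  · rintro d ⟨hdB, hd⟩
    have hdq : d ≠ q := by rintro rfl; exact hsq.ne ((hd s hs.1).1 (if_pos (Or.inl rfl)))
    have hd' : ¬(d = s ∨ d = c ∨ d = q) := fun h =>
      hdq (((hd d hdB).2 rfl).symm.trans (if_pos h))
    refine ⟨⟨hdB, fun w hw => ?_⟩, fun h => hd' (Or.inl h)⟩
    by_cases hw' : w = s ∨ w = c ∨ w = q
    · have hfw : f w = s ∨ f w = c := by
        rcases hw' with rfl | rfl | rfl
        exacts [Or.inl hfs, Or.inr hcc, Or.inr rfl]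
      exact iff_of_false (fun h => hd' (by rw [← h]; tauto)) (fun h => hd' (h ▸ hw'))
    · rw [← show g w = f w from if_neg hw']
      exact hd w hw

lemma IsStarMap.exists_improvement (hfin : B.Finite) (hadj : ∀ p ∈ B, ∃ q ∈ B, Adj p q)
    (hf : IsStarMap B f) {s : Cell} (hs : s ∈ lonelyCenters B f) :
    ∃ g, IsStarImprovement B f g s := by
  obtain ⟨q, hqB, hsq⟩ := hadj s hs.1
  by_cases hq : f q = q
  · exact hf.exists_improvement_of_center hfin hs hqB hsq hq
  by_cases hw : ∃ w ∈ B, w ≠ q ∧ w ≠ f q ∧ f w = f q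
  · obtain ⟨w, hwB, hwq, hw, hfw⟩ := hw
    exact hf.exists_improvement_of_leaf hfin hs hqB hsq hq hwB hwq hw hfw
  · push Not at hw
    exact hf.exists_improvement_of_single_leaf hfin hs hqB hsq hq hw

lemma IsStarMap.exists_lonelyCenters_eq_empty (hfin : B.Finite)
    (hadj : ∀ p ∈ B, ∃ q ∈ B, Adj p q) (hf : IsStarMap B f) :
    ∃ g, IsStarMap B g ∧ (starCenters B g).ncard ≤ (starCenters B f).ncard ∧
      lonelyCenters B g = ∅ := by
  induction h : (lonelyCenters B f).ncard using Nat.strong_induction_on generalizing f with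
  | _ n ih =>
  rcases (lonelyCenters B f).eq_empty_or_nonempty with he | ⟨s, hs⟩
  · exact ⟨f, hf, le_rfl, he⟩
  obtain ⟨g, hg, hcard, hsub⟩ := hf.exists_improvement hfin hadj hs
  have hlt : (lonelyCenters B g).ncard < n := h ▸
    (Set.ncard_le_ncard hsub ((hfin.subset fun v hv => hv.1).sdiff)).trans_lt
      (Set.ncard_sdiff_singleton_lt_of_mem hs (hfin.subset fun v hv => hv.1))
  obtain ⟨g', hg', hcard', he⟩ := ih _ hlt hg rfl
  exact ⟨g', hg', hcard'.trans hcard, he⟩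

lemma IsStarMap.exists_fragmentTiling (hfin : B.Finite) (hf : IsStarMap B f)
    (hl : lonelyCenters B f = ∅) :
    ∃ T : Finset (Set Cell), IsFragmentTiling B T ∧ T.card ≤ (starCenters B f).ncard := by
  classical
  have hCfin : (starCenters B f).Finite := hfin.subset fun v hv => hv.1
  refine ⟨hCfin.toFinset.image fun c => {w ∈ B | f w = c}, ⟨?_, ?_, ?_⟩, ?_⟩
  · simp only [Finset.mem_image, Set.Finite.mem_toFinset]
    rintro _ ⟨c, ⟨hcB, hcc⟩, rfl⟩
    have hc : c ∉ lonelyCenters B f := hl ▸ Set.notMem_empty c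
    obtain ⟨w, hwB, hw⟩ : ∃ w ∈ B, f w = c ∧ w ≠ c := by
      by_contra! h
      exact hc ⟨hcB, fun w hw => ⟨h w hw, fun hwc => hwc ▸ hcc⟩⟩
    refine isFragment_of_subset_xpent ⟨hcB, hcc⟩ ⟨hwB, hw.1⟩ hw.2 ?_
    rintro v ⟨hvB, rfl⟩
    exact (hf v hvB).2.1
  · simp only [Finset.mem_image]
    rintro _ ⟨c, -, rfl⟩ _ ⟨d, -, rfl⟩ hne
    refine Set.disjoint_left.2 fun v hc hd => hne ?_
    rw [← hc.2, ← hd.2]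
  · ext v
    simp only [Finset.mem_image, Set.Finite.mem_toFinset, Set.mem_iUnion, exists_prop]
    refine ⟨fun ⟨_, ⟨c, _, rfl⟩, hv⟩ => hv.1, fun hv => ?_⟩
    obtain ⟨h1, -, h3⟩ := hf v hv
    exact ⟨_, ⟨f v, ⟨h1, h3⟩, rfl⟩, hv, rfl⟩
  · rw [Set.ncard_eq_toFinset_card _ hCfin]
    exact Finset.card_image_le

lemma exists_starMap_of_covering {S : Finset Cell} (hSB : ↑S ⊆ B)
    (hS : B ⊆ ⋃ s ∈ S, Xpent s) : ∃ f, IsStarMap B f ∧ starCenters B f ⊆ S := by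
  classical
  choose! d hdS hd using fun v (hv : v ∈ B) => Set.mem_iUnion₂.1 (hS hv)
  refine ⟨fun v => if v ∈ S then v else d v, fun v hv => ?_, fun v ⟨hvB, hv⟩ => ?_⟩
  · by_cases hvS : v ∈ S
    · simp [hvS, hv, mem_xpent_self]
    · simp [hvS, hdS v hv, hSB (hdS v hv), hd v hv]
  · by_contra hvS
    rw [Finset.mem_coe] at hvS
    have hdv : d v = v := by simpa [hvS] using hv
    exact hvS (hdv ▸ hdS v hvB)

end StarMap

lemma IsBoard.exists_fragmentTiling_card_le {B : Set Cell} (hB : IsBoard B) {S : Finset Cell}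
    (hSB : ↑S ⊆ B) (hS : B ⊆ ⋃ s ∈ S, Xpent s) :
    ∃ T : Finset (Set Cell), IsFragmentTiling B T ∧ T.card ≤ S.card := by
  obtain ⟨hfin, -, hadj⟩ := hB
  obtain ⟨f, hf, hfS⟩ := exists_starMap_of_covering hSB hS
  obtain ⟨g, hg, hcard, hl⟩ := hf.exists_lonelyCenters_eq_empty hfin hadj
  obtain ⟨T, hT, hTcard⟩ := hg.exists_fragmentTiling hfin hl
  refine ⟨T, hT, ?_⟩
  calc T.card ≤ (starCenters B f).ncard := hTcard.trans hcard
    _ ≤ S.card := by simpa using Set.ncard_le_ncard hfS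

lemma IsRegularBoard.exists_fragmentTiling_card_le {B : Set Cell} (hB : IsRegularBoard B)
    {C : Finset Cell} (hC : B ⊆ ⋃ c ∈ C, Xpent c) :
    ∃ T : Finset (Set Cell), IsFragmentTiling B T ∧ T.card ≤ C.card := by
  obtain ⟨S, hSB, hS, hSC⟩ := hB.exists_subset_covering hC
  obtain ⟨T, hT, hTS⟩ := hB.1.exists_fragmentTiling_card_le hSB hS
  exact ⟨T, hT, hTS.trans hSC⟩

lemma IsFragmentTiling.exists_covering_card_le {B : Set Cell} {T : Finset (Set Cell)}
    (hT : IsFragmentTiling B T) :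
    ∃ C : Finset Cell, B ⊆ ⋃ c ∈ C, Xpent c ∧ C.card ≤ T.card := by
  classical
  choose! c hc using fun F (hF : F ∈ T) => (hT.1 F hF).1
  refine ⟨T.image c, ?_, Finset.card_image_le⟩
  rw [← hT.2.2]
  intro v hv
  obtain ⟨F, hF, hvF⟩ := Set.mem_iUnion₂.1 hv
  exact Set.mem_iUnion₂.2 ⟨c F, Finset.mem_image_of_mem c hF, hc F hF hvF⟩

lemma xNum_le_card {B : Set Cell} {C : Finset Cell} (hC : B ⊆ ⋃ c ∈ C, Xpent c) :
    xNum B ≤ C.card :=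
  Nat.sInf_le ⟨C, hC, rfl⟩

lemma exists_covering_card_eq_xNum {B : Set Cell} (hB : B.Finite) :
    ∃ C : Finset Cell, B ⊆ ⋃ c ∈ C, Xpent c ∧ C.card = xNum B :=
  Nat.sInf_mem (s := {k | ∃ C : Finset Cell, B ⊆ ⋃ c ∈ C, Xpent c ∧ C.card = k})
    ⟨_, hB.toFinset, fun v hv =>
      Set.mem_iUnion₂.2 ⟨v, hB.mem_toFinset.2 hv, mem_xpent_self v⟩, rfl⟩

lemma fNum_le_card {B : Set Cell} {T : Finset (Set Cell)} (hT : IsFragmentTiling B T) :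
    fNum B ≤ T.card :=
  Nat.sInf_le ⟨T, hT, rfl⟩

lemma exists_fragmentTiling_card_eq_fNum {B : Set Cell} {T : Finset (Set Cell)}
    (hT : IsFragmentTiling B T) :
    ∃ T' : Finset (Set Cell), IsFragmentTiling B T' ∧ T'.card = fNum B :=
  Nat.sInf_mem (s := {k | ∃ T : Finset (Set Cell), IsFragmentTiling B T ∧ T.card = k})
    ⟨_, T, hT, rfl⟩

/-- If `B` is a regular board then `x(B) = f(B)`. -/
theorem xNum_eq_fNum_of_regular (B : Set Cell) (hB : IsRegularBoard B) :
    xNum B = fNum B := by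
  obtain ⟨C, hC, hCx⟩ := exists_covering_card_eq_xNum hB.1.1
  obtain ⟨T₀, hT₀, hT₀C⟩ := hB.exists_fragmentTiling_card_le hC
  obtain ⟨T, hT, hTf⟩ := exists_fragmentTiling_card_eq_fNum hT₀
  obtain ⟨C', hC', hC'T⟩ := hT.exists_covering_card_le
  refine le_antisymm ?_ ?_
  · calc xNum B ≤ C'.card := xNum_le_card hC'
      _ ≤ fNum B := hTf ▸ hC'T
  · calc fNum B ≤ T₀.card := fNum_le_card hT₀
      _ ≤ xNum B := hCx ▸ hT₀C
end
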